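/- arXiv:2201.01718 — 2 statements merged into one kernel-verified Lean document; each statement's English description precedes it below -/
import Mathlib

section
/- Let L be a dually atomistic restricted Lie algebra. Then for every maximal restricted subalgebra M of L, the intersection M ∩ N(L) is a restricted ideal of L, where N(L) is the nilradical. -/
open LieAlgebra Module

section Preamble

variable (F : Type*) [Field F] (L : Type*) [LieRing L] [LieAlgebra F L]

/-- `pm` is a `p`-mapping making the Lie algebra `L` into a restricted Lie algebra. -/
structure IsPMapping (p : ℕ) (pm : L → L) : Prop where
  ad_pow : ∀ x y : L, ⁅pm x, y⁆ = ((LieAlgebra.ad F L x) ^ p) y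
  smul_pow : ∀ (c : F) (x : L), pm (c • x) = c ^ p • pm x
  add_pm : ∀ x y : L, pm (x + y) - pm x - pm y ∈ LieSubalgebra.lieSpan F L {x, y}

variable {L}

/-- A restricted subalgebra: a subalgebra closed under the `p`-mapping. -/
def IsPSub (pm : L → L) (S : LieSubalgebra F L) : Prop := ∀ x ∈ S, pm x ∈ S

/-- The restricted subalgebra generated by a set. -/
def pSpan (pm : L → L) (s : Set L) : LieSubalgebra F L :=
  sInf {S : LieSubalgebra F L | IsPSub F pm S ∧ s ⊆ S}

/-- A maximal restricted subalgebra. -/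
def IsMaxPSub (pm : L → L) (M : LieSubalgebra F L) : Prop :=
  IsPSub F pm M ∧ M ≠ ⊤ ∧ ∀ S : LieSubalgebra F L, IsPSub F pm S → M < S → S = ⊤

/-- `U` is a maximal (restricted) subalgebra of the restricted subalgebra `V`. -/
def IsMaxIn (pm : L → L) (U V : LieSubalgebra F L) : Prop :=
  U < V ∧ ∀ W : LieSubalgebra F L, IsPSub F pm W → U < W → W < V → False

/-- A restricted quasi-ideal. -/
def IsPQuasiIdeal (pm : L → L) (S : LieSubalgebra F L) : Prop :=
  IsPSub F pm S ∧ ∀ H : LieSubalgebra F L, IsPSub F pm H →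
    ∀ s ∈ S, ∀ h ∈ H, ⁅s, h⁆ ∈ S.toSubmodule ⊔ H.toSubmodule

/-- A `p`-nilpotent element. -/
def IsPNilpotentElt (pm : L → L) (x : L) : Prop := ∃ n : ℕ, 0 < n ∧ pm^[n] x = 0

variable (L)

/-- Every restricted subalgebra is an intersection of maximal restricted subalgebras. -/
def DuallyAtomisticP (pm : L → L) : Prop :=
  ∀ S : LieSubalgebra F L, IsPSub F pm S →
    ∃ 𝓜 : Set (LieSubalgebra F L), (∀ M ∈ 𝓜, IsMaxPSub F pm M) ∧ S = sInf 𝓜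

/-- Every (ordinary) subalgebra is an intersection of maximal (ordinary) subalgebras. -/
def DuallyAtomistic : Prop :=
  ∀ S : LieSubalgebra F L,
    ∃ 𝓜 : Set (LieSubalgebra F L),
      (∀ M ∈ 𝓜, M ≠ ⊤ ∧ ∀ S' : LieSubalgebra F L, M < S' → S' = ⊤) ∧ S = sInf 𝓜

/-- An almost abelian Lie algebra: `L = F x ∔ A` with `A` an abelian ideal on which
`ad x` acts as the identity. -/
def IsAlmostAbelian : Prop :=
  ∃ (x : L) (A : LieIdeal F L), IsLieAbelian A ∧ (∀ a ∈ A, ⁅x, a⁆ = a) ∧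
    x ∉ A ∧ Submodule.span F {x} ⊔ A.toSubmodule = ⊤

/-- `N` is the nilradical of `L`: the largest nilpotent ideal. -/
def IsNilradical (N : LieIdeal F L) : Prop :=
  LieModule.IsNilpotent N N ∧ ∀ I : LieIdeal F L, LieModule.IsNilpotent I I → I ≤ N

/-- Upper semimodularity of the lattice of restricted subalgebras. -/
def UpperSemimodularP (pm : L → L) : Prop :=
  ∀ S T : LieSubalgebra F L, IsPSub F pm S → IsPSub F pm T →
    IsMaxIn F pm (S ⊓ T) T → IsMaxIn F pm S (pSpan F pm ((S : Set L) ∪ (T : Set L)))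

/-- Lower semimodularity of the lattice of restricted subalgebras. -/
def LowerSemimodularP (pm : L → L) : Prop :=
  ∀ U B : LieSubalgebra F L, IsPSub F pm U → IsPSub F pm B →
    IsMaxIn F pm U (pSpan F pm ((U : Set L) ∪ (B : Set L))) → IsMaxIn F pm (U ⊓ B) B

/-- `L` is supersolvable: it admits a complete flag of ideals. -/
def IsSupersolvable : Prop :=
  ∃ (n : ℕ) (f : Fin (n + 1) → LieIdeal F L), Monotone f ∧ f 0 = ⊥ ∧ f (Fin.last n) = ⊤ ∧
    ∀ j : Fin (n + 1), Module.finrank F (f j : Submodule F L) = (j : ℕ)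

end Preamble

/-!
Write `N_k` for `N.lcsIdeal k` and `S_s` for `N.lcsShift s`. Since `ad (pm x) = (ad x) ^ p`, the
map `pm` preserves each `S_s` and the normalizer of each ideal. The ideal `N.normalizer ⊓ S_1`
is nilpotent, its `(k + 1)`-st term lying in `N_k`, so it is contained in `N`; hence `pm N ⊆ N`,
and if `N ⊄ M` then `M + N = L` by maximality, which leaves `⁅N, N⁆ ⊆ M` to be shown. The
restricted ideal `K = N ⊓ S_2` contains `⁅N, N⁆`. If `K ⊄ M`, then `M + K = L`, so
`N = (M ⊓ N) + K`, and expanding brackets gives `N_(j+1) ⊆ (M ⊓ N_(j+1)) + N_(j+2)` for all `j`;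
as `N` is nilpotent, `N_1 ⊆ M`.
-/

namespace LieIdeal

variable {R : Type*} [CommRing R] {L : Type*} [LieRing L] [LieAlgebra R L] (N : LieIdeal R L)

/-- The lower central series `N, ⁅N, N⁆, ⁅N, ⁅N, N⁆⁆, …` of `N` as a Lie algebra, by ideals of `L`
(`LieIdeal.lcs N L` would start at `L` instead). -/
def lcsIdeal (k : ℕ) : LieIdeal R L := (fun X => ⁅N, X⁆)^[k] N

lemma lcsIdeal_succ (k : ℕ) : N.lcsIdeal (k + 1) = ⁅N, N.lcsIdeal k⁆ :=
  Function.iterate_succ_apply' _ _ _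

lemma lie_mem_lcsIdeal_succ {k : ℕ} {x d : L} (hx : x ∈ N) (hd : d ∈ N.lcsIdeal k) :
    ⁅x, d⁆ ∈ N.lcsIdeal (k + 1) := by
  rw [lcsIdeal_succ]
  exact LieSubmodule.lie_mem_lie hx hd

lemma antitone_lcsIdeal : Antitone N.lcsIdeal :=
  antitone_nat_of_succ_le fun k => by rw [lcsIdeal_succ]; exact LieSubmodule.lie_le_right _ _

lemma map_lcs_eq_lcsIdeal (k : ℕ) : (N.lcs N k).map (LieSubmodule.incl N) = N.lcsIdeal k := by
  induction k with
  | zero => exact LieSubmodule.map_incl_top (N := (N : LieSubmodule R L L))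
  | succ k ih => rw [lcs_succ, LieSubmodule.map_bracket_eq, ih, lcsIdeal_succ]

lemma isNilpotent_iff_exists_lcsIdeal_eq_bot :
    LieModule.IsNilpotent N N ↔ ∃ k, N.lcsIdeal k = ⊥ := by
  rw [LieModule.isNilpotent_iff R]
  refine exists_congr fun k => ?_
  rw [← map_lcs_eq_lcsIdeal, ← LieSubmodule.toSubmodule_inj, ← coe_lcs_eq,
    LieSubmodule.bot_toSubmodule, LieSubmodule.toSubmodule_eq_bot,
    ← LieSubmodule.map_bot (f := LieSubmodule.incl N)]
  exact (LieSubmodule.map_injective_of_injective (LieSubmodule.injective_incl _)).eq_iff.symm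

def lcsShift (s : ℕ) : LieIdeal R L where
  carrier := {v | ∀ i, ∀ d ∈ N.lcsIdeal i, ⁅v, d⁆ ∈ N.lcsIdeal (i + s)}
  add_mem' ha hb i d hd := by rw [add_lie]; exact add_mem (ha i d hd) (hb i d hd)
  zero_mem' i d _ := by rw [zero_lie]; exact zero_mem _
  smul_mem' c v hv i d hd := by rw [smul_lie]; exact SMulMemClass.smul_mem c (hv i d hd)
  lie_mem {x v} hv i d hd := by
    rw [lie_lie]
    exact sub_mem (LieSubmodule.lie_mem _ (hv i d hd)) (hv i _ (LieSubmodule.lie_mem _ hd))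

lemma lcsIdeal_le_lcsShift (j : ℕ) : N.lcsIdeal j ≤ N.lcsShift (j + 1) := by
  induction j with
  | zero => exact fun a ha i d hd => N.lie_mem_lcsIdeal_succ ha hd
  | succ j ih =>
    rw [lcsIdeal_succ, LieSubmodule.lie_le_iff]
    intro a ha b hb i d hd
    rw [lie_lie]
    refine sub_mem ?_ ?_
    · have := N.lie_mem_lcsIdeal_succ ha (ih hb i d hd)
      rwa [show i + (j + 1) + 1 = i + (j + 1 + 1) by omega] at this
    · have := ih hb (i + 1) _ (N.lie_mem_lcsIdeal_succ ha hd)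
      rwa [show i + 1 + (j + 1) = i + (j + 1 + 1) by omega] at this

lemma isNilpotent_of_le_lcsShift_one [LieModule.IsNilpotent N N] {J : LieIdeal R L}
    (hJ : J ≤ N.lcsShift 1) (hJJ : ⁅J, J⁆ ≤ N) : LieModule.IsNilpotent J J := by
  have lcs_le : ∀ k, J.lcsIdeal (k + 1) ≤ N.lcsIdeal k := by
    intro k
    induction k with
    | zero => rwa [lcsIdeal_succ]
    | succ k ih =>
      rw [lcsIdeal_succ, LieSubmodule.lie_le_iff]
      exact fun x hx m hm => hJ hx k m (ih hm)
  obtain ⟨k, hk⟩ := N.isNilpotent_iff_exists_lcsIdeal_eq_bot.1 ‹_›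
  exact J.isNilpotent_iff_exists_lcsIdeal_eq_bot.2 ⟨k + 1, eq_bot_iff.2 (hk ▸ lcs_le k)⟩

variable {M : LieSubalgebra R L}

lemma lcsIdeal_succ_le_sup_of_le_sup {j : ℕ}
    (h₀ : (N : Submodule R L) ≤ M.toSubmodule ⊓ N ⊔ (N ⊓ N.lcsShift 2 : LieIdeal R L))
    (hj : (N.lcsIdeal j : Submodule R L) ≤
      M.toSubmodule ⊓ N.lcsIdeal j ⊔ (N.lcsIdeal j ⊓ N.lcsShift (j + 2) : LieIdeal R L)) :
    (N.lcsIdeal (j + 1) : Submodule R L) ≤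
      M.toSubmodule ⊓ N.lcsIdeal (j + 1) ⊔ N.lcsIdeal (j + 2) := by
  simp only [LieIdeal.toLieSubalgebra_toSubmodule] at h₀ hj ⊢
  conv_lhs => rw [lcsIdeal_succ, LieSubmodule.lieIdeal_oper_eq_linear_span']
  rw [Submodule.span_le]
  rintro _ ⟨a, ha, d, hd, rfl⟩
  obtain ⟨u, ⟨huM, huN⟩, x, ⟨-, hx⟩, rfl⟩ := Submodule.mem_sup.1 (h₀ ha)
  obtain ⟨u', ⟨hu'M, hu'N⟩, x', ⟨hx'N, hx'⟩, rfl⟩ := Submodule.mem_sup.1 (hj hd)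
  rw [add_lie, lie_add, lie_add]
  refine add_mem (add_mem ?_ ?_) (add_mem ?_ ?_)
  · exact Submodule.mem_sup_left ⟨M.lie_mem huM hu'M, N.lie_mem_lcsIdeal_succ huN hu'N⟩
  · rw [← lie_skew]
    exact Submodule.mem_sup_right (neg_mem (by simpa using hx' 0 u huN))
  · exact Submodule.mem_sup_right (by simpa [add_comm] using hx j u' hu'N)
  · exact Submodule.mem_sup_right (by simpa [add_comm] using hx j x' hx'N)

lemma lcsIdeal_one_le_of_le_sup [LieModule.IsNilpotent N N]
    (h₀ : (N : Submodule R L) ≤ M.toSubmodule ⊓ N ⊔ (N ⊓ N.lcsShift 2 : LieIdeal R L)) :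
    (N.lcsIdeal 1 : Submodule R L) ≤ M.toSubmodule := by
  have split : ∀ j, (N.lcsIdeal j : Submodule R L) ≤
      M.toSubmodule ⊓ N.lcsIdeal j ⊔ (N.lcsIdeal j ⊓ N.lcsShift (j + 2) : LieIdeal R L) := by
    intro j
    induction j with
    | zero => exact h₀
    | succ j ih =>
      refine (N.lcsIdeal_succ_le_sup_of_le_sup h₀ ih).trans (sup_le_sup_left ?_ _)
      exact le_inf (N.antitone_lcsIdeal j.succ.le_succ) (N.lcsIdeal_le_lcsShift (j + 2))
  have chain : ∀ k, (N.lcsIdeal 1 : Submodule R L) ≤ M.toSubmodule ⊔ N.lcsIdeal (k + 1) := by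
    intro k
    induction k with
    | zero => exact le_sup_right
    | succ k ih =>
      refine ih.trans (sup_le le_sup_left ?_)
      exact (N.lcsIdeal_succ_le_sup_of_le_sup h₀ (split k)).trans
        (sup_le_sup_right inf_le_left _)
  obtain ⟨k, hk⟩ := N.isNilpotent_iff_exists_lcsIdeal_eq_bot.1 ‹_›
  have hbot : N.lcsIdeal (k + 1) = ⊥ := eq_bot_iff.2 (hk ▸ N.antitone_lcsIdeal k.le_succ)
  simpa [hbot] using chain k

end LieIdeal

section Restricted

variable {F : Type*} [Field F] {L : Type*} [LieRing L] [LieAlgebra F L] {p : ℕ} {pm : L → L}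

lemma IsPMapping.lie_mem_of_lie_mem (hpm : IsPMapping F L p pm) (hp : p ≠ 0) (I : LieIdeal F L)
    {x z : L} (h : ⁅x, z⁆ ∈ I) : ⁅pm x, z⁆ ∈ I := by
  obtain ⟨q, rfl⟩ := Nat.exists_eq_succ_of_ne_zero hp
  rw [hpm.ad_pow, pow_succ, Module.End.mul_apply]
  exact Module.End.pow_apply_mem_of_forall_mem (p := (I : Submodule F L)) q
    (fun _ hy => I.lie_mem hy) _ h

lemma IsPMapping.mem_normalizer (hpm : IsPMapping F L p pm) (hp : p ≠ 0) (I : LieIdeal F L)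
    {x : L} (hx : x ∈ I.normalizer) : pm x ∈ I.normalizer := by
  rw [LieSubmodule.mem_normalizer] at hx ⊢
  intro y
  rw [← lie_skew, neg_mem_iff]
  exact hpm.lie_mem_of_lie_mem hp I (by rw [← lie_skew, neg_mem_iff]; exact hx y)

lemma IsPMapping.mem_lcsShift (hpm : IsPMapping F L p pm) (hp : p ≠ 0) (N : LieIdeal F L)
    {s : ℕ} {x : L} (hx : x ∈ N.lcsShift s) : pm x ∈ N.lcsShift s :=
  fun i d hd => hpm.lie_mem_of_lie_mem hp _ (hx i d hd)

lemma IsPMapping.map_add_mem (hpm : IsPMapping F L p pm) {S : LieSubalgebra F L} {a b : L}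
    (ha : a ∈ S) (hb : b ∈ S) (hpa : pm a ∈ S) (hpb : pm b ∈ S) : pm (a + b) ∈ S := by
  have hδ : pm (a + b) - pm a - pm b ∈ S :=
    LieSubalgebra.lieSpan_le.2 (Set.insert_subset ha (Set.singleton_subset_iff.2 hb))
      (hpm.add_pm a b)
  rw [show pm (a + b) = pm (a + b) - pm a - pm b + pm a + pm b by abel]
  exact add_mem (add_mem hδ hpa) hpb

lemma IsNilradical.normalizer_inf_lcsShift_one_le {N : LieIdeal F L} (hN : IsNilradical F L N) :
    N.normalizer ⊓ N.lcsShift 1 ≤ N := by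
  have := hN.1
  refine hN.2 _ (N.isNilpotent_of_le_lcsShift_one inf_le_right ?_)
  exact (LieSubmodule.lie_le_iff _ _ _).2 fun x _ m hm =>
    (LieSubmodule.mem_normalizer _ _).1 hm.1 x

lemma IsNilradical.pm_mem {N : LieIdeal F L} (hN : IsNilradical F L N)
    (hpm : IsPMapping F L p pm) (hp : p ≠ 0) {y : L} (hy : y ∈ N) : pm y ∈ N :=
  hN.normalizer_inf_lcsShift_one_le
    ⟨hpm.mem_normalizer hp N (N.le_normalizer hy),
      hpm.mem_lcsShift hp N (N.lcsIdeal_le_lcsShift 0 hy)⟩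

lemma IsMaxPSub.le_or_sup_eq_top {M : LieSubalgebra F L} (hM : IsMaxPSub F pm M)
    (hpm : IsPMapping F L p pm) (I : LieIdeal F L) (hI : ∀ x ∈ I, pm x ∈ I) :
    (I : Submodule F L) ≤ M.toSubmodule ∨ M.toSubmodule ⊔ I = ⊤ := by
  let S : LieSubalgebra F L :=
    { toSubmodule := M.toSubmodule ⊔ I
      lie_mem' := fun {a b} ha hb => by
        obtain ⟨m₁, hm₁, i₁, hi₁, rfl⟩ := Submodule.mem_sup.1 ha
        obtain ⟨m₂, hm₂, i₂, hi₂, rfl⟩ := Submodule.mem_sup.1 hb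
        rw [add_lie, lie_add, lie_add]
        refine add_mem (add_mem (Submodule.mem_sup_left (M.lie_mem hm₁ hm₂)) ?_) ?_ <;>
          refine Submodule.mem_sup_right ?_
        · exact I.lie_mem hi₂
        · exact add_mem (lie_mem_left _ _ I _ _ hi₁) (I.lie_mem hi₂) }
  have hS : IsPSub F pm S := fun v hv => by
    obtain ⟨m, hm, i, hi, rfl⟩ := Submodule.mem_sup.1 hv
    exact hpm.map_add_mem (Submodule.mem_sup_left hm) (Submodule.mem_sup_right hi)
      (Submodule.mem_sup_left (hM.1 m hm)) (Submodule.mem_sup_right (hI i hi))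
  by_cases hIM : (I : Submodule F L) ≤ M.toSubmodule
  · exact Or.inl hIM
  refine Or.inr (congrArg LieSubalgebra.toSubmodule (hM.2.2 S hS ?_))
  exact lt_of_le_not_ge (fun x hx => Submodule.mem_sup_left hx)
    fun hSM => hIM fun x hx => hSM (Submodule.mem_sup_right hx)

lemma IsNilradical.lcsIdeal_one_le_of_isMaxPSub {N : LieIdeal F L} (hN : IsNilradical F L N)
    (hpm : IsPMapping F L p pm) (hp : p ≠ 0) {M : LieSubalgebra F L} (hM : IsMaxPSub F pm M) :
    (N.lcsIdeal 1 : Submodule F L) ≤ M.toSubmodule := by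
  have := hN.1
  set K : LieIdeal F L := N ⊓ N.lcsShift 2
  have hKN : (K : Submodule F L) ≤ N := inf_le_left
  have hN₁K : N.lcsIdeal 1 ≤ K :=
    le_inf (N.antitone_lcsIdeal zero_le_one) (N.lcsIdeal_le_lcsShift 1)
  rcases hM.le_or_sup_eq_top hpm K fun x hx => ⟨hN.pm_mem hpm hp hx.1, hpm.mem_lcsShift hp N hx.2⟩
    with hKM | hMK
  · exact le_trans (fun x hx => hN₁K hx) hKM
  · refine N.lcsIdeal_one_le_of_le_sup (le_of_eq ?_)
    rw [sup_comm, ← sup_inf_assoc_of_le _ hKN, sup_comm, hMK, top_inf_eq]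

end Restricted

theorem maxPSub_inf_nilradical_is_restricted_ideal_general
    (F : Type*) [Field F] (L : Type*) [LieRing L] [LieAlgebra F L]
    (p : ℕ) [Fact p.Prime]
    (pm : L → L) (hpm : IsPMapping F L p pm)
    (N : LieIdeal F L) (hN : IsNilradical F L N)
    (M : LieSubalgebra F L) (hM : IsMaxPSub F pm M) :
    (∀ (x : L) (y : L), y ∈ M → y ∈ N → ⁅x, y⁆ ∈ M ∧ ⁅x, y⁆ ∈ N) ∧
      (∀ y : L, y ∈ M → y ∈ N → pm y ∈ M ∧ pm y ∈ N) := by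
  have hp : p ≠ 0 := (Fact.out : p.Prime).ne_zero
  refine ⟨fun x y hyM hyN => ⟨?_, N.lie_mem hyN⟩,
    fun y hyM hyN => ⟨hM.1 y hyM, hN.pm_mem hpm hp hyN⟩⟩
  rcases hM.le_or_sup_eq_top hpm N (fun _ => hN.pm_mem hpm hp) with hNM | hMN
  · exact hNM (N.lie_mem hyN)
  · have hx : x ∈ M.toSubmodule ⊔ N := hMN ▸ Submodule.mem_top
    obtain ⟨m, hm, n, hn, rfl⟩ := Submodule.mem_sup.1 hx
    rw [add_lie]
    exact add_mem (M.lie_mem hm hyM)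
      (hN.lcsIdeal_one_le_of_isMaxPSub hpm hp hM (N.lie_mem_lcsIdeal_succ hn hyN))

/-- for a dually atomistic restricted Lie algebra, the intersection of any
maximal restricted subalgebra with the nilradical is a restricted ideal. -/
theorem maxPSub_inf_nilradical_is_restricted_ideal
    (F : Type*) [Field F] (L : Type*) [LieRing L] [LieAlgebra F L]
    [FiniteDimensional F L] (p : ℕ) [Fact p.Prime] [CharP F p]
    (pm : L → L) (hpm : IsPMapping F L p pm)
    (h : DuallyAtomisticP F L pm)
    (N : LieIdeal F L) (hN : IsNilradical F L N)
    (M : LieSubalgebra F L) (hM : IsMaxPSub F pm M) :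
    (∀ (x : L) (y : L), y ∈ M → y ∈ N → ⁅x, y⁆ ∈ M ∧ ⁅x, y⁆ ∈ N) ∧
      (∀ y : L, y ∈ M → y ∈ N → pm y ∈ M ∧ pm y ∈ N) :=
  maxPSub_inf_nilradical_is_restricted_ideal_general F L p pm hpm N hN M hM
end

section
/- Let L be a restricted Lie algebra over a perfect field of characteristic p > 0, and let L^[p] denote the restricted subalgebra generated by all elements x^[p] with x ∈ L. Then L^[p] is a restricted quasi-ideal of L if and only if L^[p] is an ideal of L. -/
open LieAlgebra Module

/-!
Let `S = L^[p]` be a restricted quasi-ideal and `s ∈ S`. For any `x`, the restricted subalgebra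
generated by `x` is spanned by `x, x^[p], x^[p^2], …`, so it lies in `S + F x`; hence
`[s, x] ∈ S + F x`. Thus every vector of `L / S` is an eigenvector of `ad s`, and `ad s` acts on
`L / S` as a scalar `c`.

Suppose `c ≠ 0` and `S ≠ L`. By finite dimensionality some iterate `a = s^[p^m]` lies in the
span of its own higher iterates, so `ad a` is annihilated by a polynomial `X - g(X^p)` whose
derivative is `1`. The eigenvalue `c^(p^m)` of `ad a` on `L / S` is then a simple root, and lifts
to an eigenvector `y ∉ S` of `ad a`. Rescaling `a` to `b ∈ S` with `[b, y] = y` gives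
`[(b + y)^[p], b] = (ad (b + y))^p b = -y`, which lies in `S`: a contradiction. So `c = 0`,
i.e. `[s, L] ⊆ S`.
-/

open Polynomial

section LinearAlgebra

variable {K V : Type*} [Field K] [AddCommGroup V] [Module K V]

theorem Submodule.exists_forall_sub_smul_mem_of_forall_mem_sup_span {S : Submodule K V}
    (φ : Module.End K V) (hφ : ∀ x, φ x ∈ S ⊔ K ∙ x) : ∃ c : K, ∀ x, φ x - c • x ∈ S := by
  have hS : S ≤ S.comap φ := fun x hx => by
    simpa [sup_eq_left.2 ((Submodule.span_singleton_le_iff_mem x S).2 hx)] using hφ x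
  obtain ⟨c, hc⟩ := LinearMap.exists_eq_smul_id_of_forall_notLinearIndependent
    (f := S.mapQ S φ hS) <| by
    intro v
    obtain ⟨x, rfl⟩ := S.mkQ_surjective v
    obtain ⟨d, hd⟩ :
        ∃ d : K, d • (Submodule.Quotient.mk x : V ⧸ S) = Submodule.Quotient.mk (φ x) := by
      have := Submodule.mem_map_of_mem (f := S.mkQ) (hφ x)
      rwa [Submodule.map_sup, Submodule.mkQ_map_self, bot_sup_eq, Submodule.map_span,
        Set.image_singleton, Submodule.mem_span_singleton] at this
    rw [LinearIndependent.pair_iff]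
    intro h
    simpa using h d (-1) (by simp [hd])
  refine ⟨c, fun x => (Submodule.Quotient.mk_eq_zero S).1 ?_⟩
  simpa [sub_eq_zero] using LinearMap.congr_fun hc (S.mkQ x)

variable {S : Submodule K V} {φ : Module.End K V} {c : K}

theorem aeval_apply_sub_smul_mem (h : ∀ x, φ x - c • x ∈ S) (g : K[X]) (x : V) :
    aeval φ g x - g.eval c • x ∈ S := by
  have hS : ∀ x ∈ S, φ x ∈ S := fun x hx => by simpa using S.add_mem (h x) (S.smul_mem c hx)
  induction g using Polynomial.induction_on with
  | C a => simp
  | add f g hf hg => simpa [add_smul, add_sub_add_comm] using S.add_mem hf hg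
  | monomial n a ih =>
    have key : aeval φ (C a * X ^ (n + 1)) x - (C a * X ^ (n + 1)).eval c • x =
        φ (aeval φ (C a * X ^ n) x - (C a * X ^ n).eval c • x) +
          (a * c ^ n) • (φ x - c • x) := by
      simp [pow_succ', Module.End.mul_apply, smul_sub, smul_smul, mul_assoc, mul_comm c]
    rw [key]
    exact S.add_mem (hS _ ih) (S.smul_mem _ (h x))

theorem exists_notMem_apply_eq_smul (h : ∀ x, φ x - c • x ∈ S) {f : K[X]}
    (hf : aeval φ f = 0) (hf' : f.derivative.eval c ≠ 0) {x : V} (hx : x ∉ S) :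
    ∃ y ∉ S, φ y = c • y := by
  have hroot : f.IsRoot c := by
    by_contra hne
    have := S.smul_mem (f.eval c)⁻¹ (aeval_apply_sub_smul_mem h f x)
    rw [hf, LinearMap.zero_apply, zero_sub, smul_neg, smul_smul, inv_mul_cancel₀ hne, one_smul,
      neg_mem_iff] at this
    exact hx this
  set q := f /ₘ (X - C c)
  have hfq : (X - C c) * q = f := mul_divByMonic_eq_iff_isRoot.2 hroot
  have hq : q.eval c ≠ 0 := by
    simpa [← hfq, derivative_mul] using hf'
  refine ⟨aeval φ q x, fun hy => hx ?_, ?_⟩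
  · have := S.sub_mem hy (aeval_apply_sub_smul_mem h q x)
    simpa [hq] using S.smul_mem (q.eval c)⁻¹ this
  · have := LinearMap.congr_fun (congrArg (aeval φ) hfq) x
    rw [hf, map_mul, Module.End.mul_apply] at this
    simp only [map_sub, aeval_X, aeval_C, LinearMap.sub_apply, Module.algebraMap_end_apply,
      LinearMap.zero_apply] at this
    exact sub_eq_zero.1 this

theorem exists_mem_span_range_add [IsArtinian K V] (v : ℕ → V) :
    ∃ m, v m ∈ Submodule.span K (Set.range fun j => v (j + 1 + m)) := by
  let W : ℕ → Submodule K V := fun n => Submodule.span K (Set.range fun j => v (j + n))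
  have hW : Antitone W := antitone_nat_of_succ_le fun n => Submodule.span_mono <| by
    rintro _ ⟨j, rfl⟩
    exact ⟨j + 1, show v (j + 1 + n) = v (j + (n + 1)) by rw [add_right_comm, add_assoc]⟩
  obtain ⟨m, hm⟩ := WellFoundedLT.antitone_chain_condition hW
  refine ⟨m, ?_⟩
  have hWm : W m = Submodule.span K (Set.range fun j => v (j + 1 + m)) := by
    simp only [hm (m + 1) m.le_succ, W, add_right_comm _ 1 m, add_assoc]
  rw [← hWm]
  exact Submodule.subset_span ⟨0, congrArg v (zero_add m)⟩

end LinearAlgebra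

section RestrictedLieAlgebra

variable {F : Type*} [Field F] {L : Type*} [LieRing L] [LieAlgebra F L] {pm : L → L}

theorem subset_pSpan (s : Set L) : s ⊆ pSpan F pm s := by
  intro x hx
  rw [pSpan, SetLike.mem_coe, ← LieSubalgebra.mem_toSubmodule, LieSubalgebra.sInf_toSubmodule,
    Submodule.mem_sInf]
  rintro _ ⟨S, hS, rfl⟩
  exact hS.2 hx

theorem isPSub_pSpan (s : Set L) : IsPSub F pm (pSpan F pm s) := by
  intro x hx
  rw [pSpan, ← LieSubalgebra.mem_toSubmodule, LieSubalgebra.sInf_toSubmodule,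
    Submodule.mem_sInf] at hx ⊢
  rintro _ ⟨S, hS, rfl⟩
  exact hS.1 x (hx _ ⟨S, hS, rfl⟩)

theorem isPQuasiIdeal_of_forall_lie_mem {S : LieSubalgebra F L} (hS : IsPSub F pm S)
    (h : ∀ x y : L, y ∈ S → ⁅x, y⁆ ∈ S) : IsPQuasiIdeal F pm S :=
  ⟨hS, fun _ _ s hs h' _ =>
    Submodule.mem_sup_left (by rw [← lie_skew]; exact neg_mem (h h' s hs))⟩

namespace IsPMapping

variable {p : ℕ} (hpm : IsPMapping F L p pm)
include hpm

theorem ad_iterate (n : ℕ) (x : L) : ad F L (pm^[n] x) = ad F L x ^ p ^ n := by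
  induction n with
  | zero => simp
  | succ n ih =>
    ext y
    rw [Function.iterate_succ_apply', ad_apply, hpm.ad_pow, ih, ← pow_mul, ← pow_succ]

theorem exists_aeval_ad_iterate_eq_zero [CharP F p] [FiniteDimensional F L] (s : L) :
    ∃ m, ∃ f : F[X], aeval (ad F L (pm^[m] s)) f = 0 ∧ derivative f = 1 := by
  obtain ⟨m, hm⟩ := exists_mem_span_range_add (K := F) fun n => pm^[n] s
  set a := pm^[m] s
  simp only [Function.iterate_add_apply pm _ m] at hm
  let P : Submodule F F[X] := Submodule.span F (Set.range fun j => X ^ p ^ (j + 1))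
  have hP : P ≤ LinearMap.ker (derivative (R := F)) := by
    rw [Submodule.span_le]
    rintro _ ⟨j, rfl⟩
    simp [derivative_X_pow]
  obtain ⟨g, hgP, hg⟩ : ∃ g ∈ P, aeval (ad F L a) g = ad F L a := by
    have := Submodule.mem_map_of_mem (f := (ad F L : L →ₗ[F] Module.End F L)) hm
    rw [Submodule.map_span, ← Set.range_comp] at this
    have e : ((ad F L : L →ₗ[F] Module.End F L) ∘ fun j => pm^[j + 1] a) =
        (aeval (ad F L a)).toLinearMap ∘ fun j => (X : F[X]) ^ p ^ (j + 1) := by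
      funext j
      show ad F L (pm^[j + 1] a) = aeval (ad F L a) (X ^ p ^ (j + 1))
      rw [hpm.ad_iterate, map_pow, aeval_X]
    rwa [e, Set.range_comp, ← Submodule.map_span, Submodule.mem_map] at this
  refine ⟨m, X - g, ?_, by simp [LinearMap.mem_ker.1 (hP hgP)]⟩
  rw [map_sub, aeval_X]
  exact sub_eq_zero.2 hg.symm

variable [Fact p.Prime]

theorem map_zero : pm 0 = 0 := by
  simpa [zero_pow (Nat.Prime.ne_zero Fact.out)] using hpm.smul_pow 0 0

theorem lie_iterate_iterate (x : L) (i j : ℕ) : ⁅pm^[i] x, pm^[j] x⁆ = 0 := by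
  have hpos (n : ℕ) : ∃ k, p ^ n = k + 1 :=
    Nat.exists_eq_succ_of_ne_zero (pow_ne_zero n (Nat.Prime.ne_zero Fact.out))
  obtain ⟨k, hk⟩ := hpos j
  obtain ⟨l, hl⟩ := hpos i
  have hx : ⁅x, pm^[j] x⁆ = 0 := by
    rw [← lie_skew, ← ad_apply (R := F), hpm.ad_iterate, hk, pow_succ, Module.End.mul_apply,
      ad_apply, lie_self, LinearMap.map_zero, neg_zero]
  rw [← ad_apply (R := F), hpm.ad_iterate, hl, pow_succ, Module.End.mul_apply, ad_apply, hx,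
    LinearMap.map_zero]

theorem isPSub_of_toSubmodule_eq_span {A : LieSubalgebra F L} {T : Set L}
    (hA : A.toSubmodule = Submodule.span F T) (hT : ∀ t ∈ T, pm t ∈ A) : IsPSub F pm A := by
  have hmem : ∀ {w}, w ∈ Submodule.span F T → w ∈ A := fun hw => by
    rwa [← hA, LieSubalgebra.mem_toSubmodule] at hw
  intro z hz
  rw [← LieSubalgebra.mem_toSubmodule, hA] at hz
  induction hz using Submodule.span_induction with
  | mem t ht => exact hT t ht
  | zero => simp [hpm.map_zero]
  | add a b ha hb hpa hpb =>
    have hab : pm (a + b) - pm a - pm b ∈ A :=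
      LieSubalgebra.lieSpan_le.2 (by simp [Set.insert_subset_iff, hmem ha, hmem hb])
        (hpm.add_pm a b)
    simpa only [sub_add_cancel] using A.add_mem (A.add_mem hab hpb) hpa
  | smul c a _ hpa => simpa [hpm.smul_pow] using A.smul_mem (c ^ p) hpa

theorem lieSpan_iterate_toSubmodule (x : L) :
    (LieSubalgebra.lieSpan F L (Set.range fun n => pm^[n] x) : Submodule F L) =
      Submodule.span F (Set.range fun n => pm^[n] x) := by
  refine LieSubalgebra.coe_lieSpan_eq_span_of_forall_lie_eq_zero ?_
  rintro _ ⟨i, rfl⟩ _ ⟨j, rfl⟩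
  exact hpm.lie_iterate_iterate x i j

theorem isPSub_lieSpan_iterate (x : L) :
    IsPSub F pm (LieSubalgebra.lieSpan F L (Set.range fun n => pm^[n] x)) := by
  refine hpm.isPSub_of_toSubmodule_eq_span (hpm.lieSpan_iterate_toSubmodule x) ?_
  rintro _ ⟨n, rfl⟩
  exact LieSubalgebra.subset_lieSpan ⟨n + 1, Function.iterate_succ_apply' pm n x⟩

theorem lie_add_eq_neg_of_lie_eq_self {b y : L} (hby : ⁅b, y⁆ = y) :
    ⁅pm (b + y), b⁆ = -y := by
  have hy : ad F L (b + y) (-y) = -y := by simp [hby]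
  have hb : ad F L (b + y) b = -y := by
    rw [ad_apply, add_lie, lie_self, ← lie_skew, hby, zero_add]
  obtain ⟨n, hn⟩ := Nat.exists_eq_succ_of_ne_zero (Nat.Prime.ne_zero (Fact.out : p.Prime))
  rw [hpm.ad_pow, hn, pow_succ, Module.End.mul_apply, hb, Module.End.pow_apply,
    Function.iterate_fixed hy]

end IsPMapping

end RestrictedLieAlgebra

section QuasiIdeal

variable {F : Type*} [Field F] {L : Type*} [LieRing L] [LieAlgebra F L] {p : ℕ} [Fact p.Prime]
  {pm : L → L} {S : LieSubalgebra F L}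

theorem IsPQuasiIdeal.exists_forall_lie_sub_smul_mem (hpm : IsPMapping F L p pm)
    (hq : IsPQuasiIdeal F pm S) (hS : Set.range pm ⊆ S) {s : L} (hs : s ∈ S) :
    ∃ c : F, ∀ x, ⁅s, x⁆ - c • x ∈ S := by
  refine S.toSubmodule.exists_forall_sub_smul_mem_of_forall_mem_sup_span (ad F L s) fun x => ?_
  have hle : (LieSubalgebra.lieSpan F L (Set.range fun n => pm^[n] x) : Submodule F L) ≤
      S.toSubmodule ⊔ F ∙ x := by
    rw [hpm.lieSpan_iterate_toSubmodule, Submodule.span_le]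
    rintro _ ⟨_ | n, rfl⟩
    · exact Submodule.mem_sup_right (Submodule.mem_span_singleton_self x)
    · exact Submodule.mem_sup_left (hS ⟨_, (Function.iterate_succ_apply' pm n x).symm⟩)
  exact sup_le le_sup_left hle
    (hq.2 _ (hpm.isPSub_lieSpan_iterate x) s hs x (LieSubalgebra.subset_lieSpan ⟨0, rfl⟩))

theorem IsPMapping.eq_zero_of_forall_lie_sub_smul_mem [CharP F p] [FiniteDimensional F L]
    (hpm : IsPMapping F L p pm) (hS : Set.range pm ⊆ S) {s : L} (hs : s ∈ S) {c : F}
    (hc : ∀ x, ⁅s, x⁆ - c • x ∈ S) {x₀ : L} (hx₀ : x₀ ∉ S) : c = 0 := by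
  by_contra hc0
  obtain ⟨m, f, hf, hf'⟩ := hpm.exists_aeval_ad_iterate_eq_zero s
  set a := pm^[m] s
  have ha : a ∈ S := by
    cases m with
    | zero => exact hs
    | succ m => exact hS ⟨_, (Function.iterate_succ_apply' pm m s).symm⟩
  have hca : ∀ x, ad F L a x - c ^ p ^ m • x ∈ S.toSubmodule := fun x => by
    simpa [a, hpm.ad_iterate] using
      aeval_apply_sub_smul_mem (S := S.toSubmodule) (φ := ad F L s) hc (X ^ p ^ m) x
  obtain ⟨y, hyS, hy⟩ := exists_notMem_apply_eq_smul hca hf (by simp [hf']) hx₀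
  set b := (c ^ p ^ m)⁻¹ • a
  have hby : ⁅b, y⁆ = y := by
    rw [smul_lie, ← ad_apply (R := F), hy, smul_smul, inv_mul_cancel₀ (pow_ne_zero _ hc0),
      one_smul]
  have := S.lie_mem (hS ⟨b + y, rfl⟩) (S.smul_mem (c ^ p ^ m)⁻¹ ha)
  rw [hpm.lie_add_eq_neg_of_lie_eq_self hby, neg_mem_iff] at this
  exact hyS this

end QuasiIdeal

theorem pPower_subalgebra_quasiIdeal_iff_ideal_general
    (F : Type*) [Field F] (L : Type*) [LieRing L] [LieAlgebra F L]
    [FiniteDimensional F L] (p : ℕ) [Fact p.Prime] [CharP F p]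
    (pm : L → L) (hpm : IsPMapping F L p pm) :
    IsPQuasiIdeal F pm (pSpan F pm (Set.range pm)) ↔
      ∀ (x : L) (y : L), y ∈ pSpan F pm (Set.range pm) →
        ⁅x, y⁆ ∈ pSpan F pm (Set.range pm) := by
  set S := pSpan F pm (Set.range pm)
  refine ⟨fun hq x y hy => ?_, isPQuasiIdeal_of_forall_lie_mem (isPSub_pSpan _)⟩
  by_cases hS : ∀ z, z ∈ S
  · exact S.lie_mem (hS x) hy
  obtain ⟨x₀, hx₀⟩ := not_forall.1 hS
  obtain ⟨c, hc⟩ := hq.exists_forall_lie_sub_smul_mem hpm (subset_pSpan _) hy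
  obtain rfl := hpm.eq_zero_of_forall_lie_sub_smul_mem (subset_pSpan _) hy hc hx₀
  rw [← lie_skew]
  exact neg_mem (by simpa using hc x)

/-- over a perfect field, `L^[p]` is a restricted quasi-ideal of `L` iff it is
an ideal of `L`. -/
theorem pPower_subalgebra_quasiIdeal_iff_ideal
    (F : Type*) [Field F] [PerfectField F] (L : Type*) [LieRing L] [LieAlgebra F L]
    [FiniteDimensional F L] (p : ℕ) [Fact p.Prime] [CharP F p]
    (pm : L → L) (hpm : IsPMapping F L p pm) :
    IsPQuasiIdeal F pm (pSpan F pm (Set.range pm)) ↔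
      ∀ (x : L) (y : L), y ∈ pSpan F pm (Set.range pm) →
        ⁅x, y⁆ ∈ pSpan F pm (Set.range pm) :=
  pPower_subalgebra_quasiIdeal_iff_ideal_general F L p pm hpm
end
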